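/- arXiv:1605.09210 — 2 statements merged into one kernel-verified Lean document; each statement's English description precedes it below -/
import Mathlib

section
/- Let k ∈ L¹(ℝ^d) with ∫ k = 0, and let μ be a modulus of continuity such that |x| k(x) ∈ L¹(ℝ^d) and such that Γ_μ(s) := s μ(1/s) is non-decreasing on [1,∞). Then there exists a constant C > 0, depending only on ‖k‖_{L¹} and ‖ |·| k ‖_{L¹}, such that for all λ ≥ 1: λ^d ∫_{ℝ^d} |k(λ y)| μ(min(|y|,1)) dy ≤ C μ(1/λ). -/
open MeasureTheory Module Set

/-! Rescaling `y = x / λ` turns the left-hand side into `∫ |k x| μ(min (|x| / λ) 1) dx`.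
On `|x| ≤ 1` monotonicity of `μ` bounds the modulus factor by `μ(1/λ)`; for `|x| ≥ 1` the
monotonicity of `Γ_μ` between `1 / min (|x| / λ) 1` and `λ` bounds it by `|x| μ(1/λ)`.
Hence the integral is at most `μ(1/λ) ∫ (1 + |x|) |k x| dx`. -/

lemma pow_finrank_smul_integral_comp_smul {E F : Type*} [NormedAddCommGroup E] [NormedSpace ℝ E]
    [MeasurableSpace E] [BorelSpace E] [FiniteDimensional ℝ E] (ν : Measure E)
    [ν.IsAddHaarMeasure] [NormedAddCommGroup F] [NormedSpace ℝ F] (f : E → F) {l : ℝ}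
    (hl : 0 < l) :
    l ^ finrank ℝ E • ∫ y, f (l • y) ∂ν = ∫ x, f x ∂ν := by
  rw [Measure.integral_comp_smul_of_nonneg ν f l (hR := hl.le), smul_smul,
    mul_inv_cancel₀ (pow_ne_zero _ hl.ne'), one_smul]

section Modulus

variable {μ : ℝ → ℝ} {l : ℝ}

lemma le_mul_of_monotone_mul_one_div
    (hΓmono : ∀ s t : ℝ, 1 ≤ s → s ≤ t → s * μ (1 / s) ≤ t * μ (1 / t))
    (hl : 1 ≤ l) {t : ℝ} (hlt : 1 / l ≤ t) (ht : t ≤ 1) :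
    μ t ≤ l * t * μ (1 / l) := by
  have ht0 : 0 < t := lt_of_lt_of_le (by positivity) hlt
  have hΓ := hΓmono (1 / t) l (by rw [le_div_iff₀ ht0]; linarith)
    (by rw [div_le_iff₀ ht0]; rwa [div_le_iff₀ (by linarith), mul_comm] at hlt)
  rw [one_div_one_div] at hΓ
  calc μ t = t * (1 / t * μ t) := by field_simp
    _ ≤ t * (l * μ (1 / l)) := by gcongr
    _ = l * t * μ (1 / l) := by ring

lemma modulus_min_div_le (hμmono : MonotoneOn μ (Icc 0 1))
    (hΓmono : ∀ s t : ℝ, 1 ≤ s → s ≤ t → s * μ (1 / s) ≤ t * μ (1 / t))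
    (hl : 1 ≤ l) (hμl : 0 ≤ μ (1 / l)) {s : ℝ} (hs : 0 ≤ s) :
    μ (min (s / l) 1) ≤ (1 + s) * μ (1 / l) := by
  have hl0 : 0 < l := by linarith
  have hinvl : 1 / l ≤ 1 := by rw [div_le_one hl0]; exact hl
  rcases le_or_gt s 1 with hs1 | hs1
  · have hsl : s / l ≤ 1 / l := by gcongr
    rw [min_eq_left (hsl.trans hinvl)]
    calc μ (s / l) ≤ μ (1 / l) :=
          hμmono ⟨by positivity, hsl.trans hinvl⟩ ⟨by positivity, hinvl⟩ hsl
      _ ≤ (1 + s) * μ (1 / l) := le_mul_of_one_le_left hμl (by linarith)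
  · have hlt : 1 / l ≤ min (s / l) 1 := le_min (by gcongr) hinvl
    calc μ (min (s / l) 1) ≤ l * min (s / l) 1 * μ (1 / l) :=
          le_mul_of_monotone_mul_one_div hΓmono hl hlt (min_le_right _ _)
      _ ≤ (1 + s) * μ (1 / l) := by
          gcongr
          calc l * min (s / l) 1 ≤ l * (s / l) := by gcongr; exact min_le_left _ _
            _ = s := by field_simp
            _ ≤ 1 + s := by linarith

end Modulus

theorem kernel_modulus_estimate_general {d : ℕ}
    (k : EuclideanSpace ℝ (Fin d) → ℝ)
    (hk : Integrable k)
    (hkx : Integrable (fun x => ‖x‖ * |k x|))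
    (μ : ℝ → ℝ)
    (hμmono : MonotoneOn μ (Set.Icc 0 1))
    (hμnonneg : ∀ s, 0 ≤ s → 0 ≤ μ s)
    (hΓmono : ∀ s t : ℝ, 1 ≤ s → s ≤ t → s * μ (1 / s) ≤ t * μ (1 / t)) :
    ∃ C > 0, ∀ l : ℝ, 1 ≤ l →
      l ^ d * ∫ y, |k (l • y)| * μ (min ‖y‖ 1) ≤ C * μ (1 / l) := by
  have hmajorant : Integrable fun x => (1 + ‖x‖) * |k x| := by
    refine (hk.abs.add hkx).congr (ae_of_all _ fun x => ?_)
    simp only [Pi.add_apply]; ring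
  refine ⟨(∫ x, (1 + ‖x‖) * |k x|) + 1, by positivity, fun l hl => ?_⟩
  have hl0 : 0 < l := by linarith
  have hμl : 0 ≤ μ (1 / l) := hμnonneg _ (by positivity)
  have hrescale : ∀ y : EuclideanSpace ℝ (Fin d), ‖l • y‖ / l = ‖y‖ := fun y => by
    rw [norm_smul, Real.norm_of_nonneg hl0.le]; field_simp
  calc l ^ d * ∫ y, |k (l • y)| * μ (min ‖y‖ 1)
      = ∫ x, |k x| * μ (min (‖x‖ / l) 1) := by
        rw [← pow_finrank_smul_integral_comp_smul volume
          (fun x => |k x| * μ (min (‖x‖ / l) 1)) hl0, finrank_euclideanSpace_fin, smul_eq_mul]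
        simp only [hrescale]
    _ ≤ ∫ x, (1 + ‖x‖) * |k x| * μ (1 / l) := by
        refine integral_mono_of_nonneg (ae_of_all _ fun x => mul_nonneg (abs_nonneg _)
          (hμnonneg _ (by positivity))) (hmajorant.mul_const _) (ae_of_all _ fun x => ?_)
        calc |k x| * μ (min (‖x‖ / l) 1) ≤ |k x| * ((1 + ‖x‖) * μ (1 / l)) := by
              gcongr; exact modulus_min_div_le hμmono hΓmono hl hμl (norm_nonneg x)
          _ = (1 + ‖x‖) * |k x| * μ (1 / l) := by ring
    _ = (∫ x, (1 + ‖x‖) * |k x|) * μ (1 / l) := integral_mul_const _ _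
    _ ≤ ((∫ x, (1 + ‖x‖) * |k x|) + 1) * μ (1 / l) := by gcongr; linarith

/-- Kernel estimate. If `k ∈ L¹(ℝ^d)` has zero mean, `‖x‖ k(x) ∈ L¹`,
and `μ` is a modulus of continuity (continuous, non-decreasing, `μ 0 = 0`, nonnegative)
such that `Γ_μ(s) = s μ(1/s)` is non-decreasing on `[1,∞)`, then there is `C > 0`,
depending only on `‖k‖_{L¹}` and `‖‖·‖ k‖_{L¹}`, such that for all `λ ≥ 1`:
`λ^d ∫ |k(λ y)| μ(min(‖y‖,1)) dy ≤ C μ(1/λ)`. -/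
theorem kernel_modulus_estimate {d : ℕ}
    (k : EuclideanSpace ℝ (Fin d) → ℝ)
    (hk : Integrable k)
    (hk0 : ∫ x, k x = 0)
    (hkx : Integrable (fun x => ‖x‖ * |k x|))
    (μ : ℝ → ℝ)
    (hμcont : ContinuousOn μ (Set.Icc 0 1))
    (hμmono : MonotoneOn μ (Set.Icc 0 1))
    (hμ0 : μ 0 = 0)
    (hμnonneg : ∀ s, 0 ≤ s → 0 ≤ μ s)
    (hΓmono : ∀ s t : ℝ, 1 ≤ s → s ≤ t → s * μ (1 / s) ≤ t * μ (1 / t)) :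
    ∃ C > 0, ∀ l : ℝ, 1 ≤ l →
      l ^ d * ∫ y, |k (l • y)| * μ (min ‖y‖ 1) ≤ C * μ (1 / l) :=
  kernel_modulus_estimate_general k hk hkx μ hμmono hμnonneg hΓmono
end

section
/- Let a ∈ Z_μ(ℝ^d) for an admissible modulus of continuity μ. Then there exists a constant C_a > 0, depending only on ‖a‖_{Z_μ}, such that for all 0 < |y| ≤ 1: sup_x |a(x+y) − a(x)| ≤ C_a μ(|y|) log(1 + 1/|y|). -/
open MeasureTheory

set_option maxHeartbeats 2000000 in
/-- Proposition 5: if `μ` is an admissible modulus of continuity and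
`a ∈ Z_μ(ℝ^d)` (bounded by `Na`, with Zygmund seminorm at most `Za`), then there is
`C_a > 0`, depending only on `‖a‖_{Z_μ} = Na + Za`, such that for all `0 < ‖y‖ ≤ 1`:
`sup_x |a(x+y) - a(x)| ≤ C_a μ(‖y‖) log(1 + 1/‖y‖)`. -/
theorem zygmund_first_difference_log {d : ℕ}
    (μ : ℝ → ℝ)
    (hμcont : ContinuousOn μ (Set.Icc 0 1))
    (hμmono : MonotoneOn μ (Set.Icc 0 1))
    (hμ0 : μ 0 = 0)
    (hμnonneg : ∀ s, 0 ≤ s → 0 ≤ μ s)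
    (hΓmono : ∀ s t : ℝ, 1 ≤ s → s ≤ t → s * μ (1 / s) ≤ t * μ (1 / t))
    (hΓint : ∀ s : ℝ, 1 ≤ s → IntegrableOn (fun σ => σ⁻¹ ^ 2 * (σ * μ (1 / σ))) (Set.Ioi s))
    (C₀ : ℝ) (hC₀ : 0 < C₀)
    (hΓadm : ∀ s : ℝ, 1 ≤ s →
      ∫ σ in Set.Ioi s, σ⁻¹ ^ 2 * (σ * μ (1 / σ)) ≤ C₀ * s⁻¹ * (s * μ (1 / s)))
    (a : EuclideanSpace ℝ (Fin d) → ℝ) (Na Za : ℝ)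
    (hNa : ∀ x, |a x| ≤ Na)
    (hZa : ∀ x y : EuclideanSpace ℝ (Fin d), ‖y‖ ≤ 1 →
      |a (x + y) + a (x - y) - 2 * a x| ≤ Za * μ ‖y‖) :
    ∃ Ca : ℝ, 0 < Ca ∧ ∀ x y : EuclideanSpace ℝ (Fin d), 0 < ‖y‖ → ‖y‖ ≤ 1 →
      |a (x + y) - a x| ≤ Ca * μ ‖y‖ * Real.log (1 + 1 / ‖y‖) := by
  classical
  have hNa0 : 0 ≤ Na := le_trans (abs_nonneg _) (hNa 0)
  set Z : ℝ := max Za 0 with hZdef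
  have hZ0 : 0 ≤ Z := le_max_right _ _
  have hZa' : ∀ x y : EuclideanSpace ℝ (Fin d), ‖y‖ ≤ 1 →
      |a (x + y) + a (x - y) - 2 * a x| ≤ Z * μ ‖y‖ := by
    intro x y hy
    refine (hZa x y hy).trans ?_
    have h1 := hμnonneg ‖y‖ (norm_nonneg y)
    have h2 : Za ≤ Z := le_max_left _ _
    nlinarith
  by_cases hμ1 : μ 1 ≤ 0
  · -- degenerate case : μ vanishes on [0,1]
    have hμz : ∀ t : ℝ, 0 ≤ t → t ≤ 1 → μ t = 0 := by
      intro t h0 h1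
      have h2 := hμmono (Set.mem_Icc.mpr ⟨h0, h1⟩)
        (Set.mem_Icc.mpr ⟨zero_le_one, le_refl 1⟩) h1
      have h3 := hμnonneg t h0
      linarith
    have hmid : ∀ x y : EuclideanSpace ℝ (Fin d), ‖y‖ ≤ 1 →
        a (x + y) + a (x - y) - 2 * a x = 0 := by
      intro x y hy
      have h := hZa x y hy
      rw [hμz ‖y‖ (norm_nonneg y) hy, mul_zero] at h
      exact abs_eq_zero.mp (le_antisymm h (abs_nonneg _))
    refine ⟨1, one_pos, ?_⟩
    intro x y hy0 hy1
    have key : ∀ n : ℕ, a (x + (n : ℝ) • y) = a x + n * (a (x + y) - a x) ∧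
        a (x + ((n : ℝ) + 1) • y) = a x + ((n : ℝ) + 1) * (a (x + y) - a x) := by
      intro n
      induction n with
      | zero => constructor <;> simp
      | succ m ih =>
        obtain ⟨ih1, ih2⟩ := ih
        constructor
        · push_cast
          exact ih2
        · have h := hmid (x + ((m : ℝ) + 1) • y) y hy1
          have e1 : x + ((m : ℝ) + 1) • y + y = x + (((m : ℝ) + 1) + 1) • y := by module
          have e2 : x + ((m : ℝ) + 1) • y - y = x + (m : ℝ) • y := by module
          rw [e1, e2, ih1, ih2] at h
          push_cast
          linarith
    have hc0 : a (x + y) - a x = 0 := by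
      by_contra hne
      obtain ⟨n, hn⟩ := exists_nat_gt ((2 * Na) / |a (x + y) - a x|)
      have h1 := (key n).1
      have h2 : |a (x + (n : ℝ) • y) - a x| ≤ 2 * Na := by
        have := hNa (x + (n : ℝ) • y)
        have := hNa x
        have := abs_sub (a (x + (n : ℝ) • y)) (a x)
        calc |a (x + (n : ℝ) • y) - a x| ≤ |a (x + (n : ℝ) • y)| + |a x| := abs_sub _ _
        _ ≤ 2 * Na := by linarith
      rw [h1] at h2
      have h3 : a x + (n : ℝ) * (a (x + y) - a x) - a x = (n : ℝ) * (a (x + y) - a x) := by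
        ring
      rw [h3, abs_mul, Nat.abs_cast] at h2
      have hcp : 0 < |a (x + y) - a x| := abs_pos.mpr hne
      have h4 := (div_lt_iff₀ hcp).mp hn
      linarith
    rw [hc0, abs_zero, hμz ‖y‖ (norm_nonneg y) hy1]
    simp
  · push_neg at hμ1
    -- μ 1 > 0 : main case
    have hdouble : ∀ t : ℝ, 0 < t → 2 * t ≤ 1 → μ (2 * t) ≤ 2 * μ t := by
      intro t ht h2t
      have h2tp : 0 < 2 * t := by linarith
      have hs1 : (1 : ℝ) ≤ (2 * t)⁻¹ := by
        rw [le_inv_comm₀ one_pos h2tp]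
        simpa using h2t
      have hst : (2 * t)⁻¹ ≤ t⁻¹ := by
        apply inv_anti₀ ht
        linarith
      have h := hΓmono (2 * t)⁻¹ t⁻¹ hs1 hst
      rw [one_div, inv_inv, one_div, inv_inv] at h
      have h' := mul_le_mul_of_nonneg_left h (le_of_lt h2tp)
      have e1 : 2 * t * ((2 * t)⁻¹ * μ (2 * t)) = μ (2 * t) := by
        field_simp
      have e2 : 2 * t * (t⁻¹ * μ t) = 2 * μ t := by
        field_simp
      rw [e1, e2] at h'
      exact h'
    have hscale : ∀ t : ℝ, 0 < t → t ≤ 1 → t * μ 1 ≤ μ t := by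
      intro t ht h1
      have hs1 : (1 : ℝ) ≤ t⁻¹ := by
        rw [le_inv_comm₀ one_pos ht]
        simpa using h1
      have h := hΓmono 1 t⁻¹ le_rfl hs1
      simp only [one_div, inv_inv, inv_one, one_mul] at h
      have h' := mul_le_mul_of_nonneg_left h (le_of_lt ht)
      have e2 : t * (t⁻¹ * μ t) = μ t := by field_simp
      rw [e2] at h'
      exact h'
    -- main dyadic iteration
    have key : ∀ n : ℕ, ∀ x y : EuclideanSpace ℝ (Fin d), 2 ^ n * ‖y‖ ≤ 2 →
        |a (x + y) - a x| ≤ 2 * Na / 2 ^ n + Z * ((n : ℝ) / 2) * μ ‖y‖ := by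
      intro n
      induction n with
      | zero =>
        intro x y _hy
        have h1 := hNa (x + y)
        have h2 := hNa x
        have h3 : |a (x + y) - a x| ≤ |a (x + y)| + |a x| := abs_sub _ _
        simp only [pow_zero, Nat.cast_zero]
        have hμy := hμnonneg ‖y‖ (norm_nonneg y)
        nlinarith
      | succ m ih =>
        intro x y hy
        by_cases hy0 : ‖y‖ = 0
        · have hyz : y = 0 := norm_eq_zero.mp hy0
          subst hyz
          rw [hy0]
          simp only [add_zero, sub_self, abs_zero, hμ0, mul_zero]
          positivity
        have hypos : 0 < ‖y‖ := lt_of_le_of_ne (norm_nonneg y) (Ne.symm hy0)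
        have h2p : (2 : ℝ) ≤ 2 ^ (m + 1) := by
          calc (2 : ℝ) = 2 ^ 1 := (pow_one 2).symm
          _ ≤ 2 ^ (m + 1) := pow_le_pow_right₀ one_le_two (Nat.le_add_left 1 m)
        have hy1 : ‖y‖ ≤ 1 := by nlinarith
        have hpow : (2 : ℝ) ^ (m + 1) = 2 ^ m * 2 := pow_succ 2 m
        have h2y : ‖(2 : ℝ) • y‖ = 2 * ‖y‖ := by
          rw [norm_smul]; simp
        have ih' := ih x ((2 : ℝ) • y) (by rw [h2y]; rw [hpow] at hy; linarith)
        rw [h2y] at ih'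
        have hz := hZa' (x + y) y hy1
        have e1 : x + y + y = x + (2 : ℝ) • y := by module
        have e2 : x + y - y = x := by module
        rw [e1, e2] at hz
        have hμle : Z * ((m : ℝ) / 2) * μ (2 * ‖y‖) ≤ Z * ((m : ℝ) / 2) * (2 * μ ‖y‖) := by
          rcases Nat.eq_zero_or_pos m with hm | hm
          · subst hm; simp
          · have hm1 : (1 : ℝ) ≤ (m : ℝ) := by exact_mod_cast hm
            have h4 : (4 : ℝ) ≤ 2 ^ (m + 1) := by
              calc (4 : ℝ) = 2 ^ 2 := by norm_num
              _ ≤ 2 ^ (m + 1) := pow_le_pow_right₀ one_le_two (by omega)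
            have h2y1 : 2 * ‖y‖ ≤ 1 := by nlinarith
            have hd := hdouble ‖y‖ hypos h2y1
            have hc : 0 ≤ Z * ((m : ℝ) / 2) := by positivity
            exact mul_le_mul_of_nonneg_left hd hc
        have hiden : a (x + y) - a x =
            ((a (x + (2 : ℝ) • y) - a x) - (a (x + (2 : ℝ) • y) + a x - 2 * a (x + y))) / 2 := by
          ring
        rw [hiden, abs_div]
        have habs2 : |(2 : ℝ)| = 2 := by norm_num
        rw [habs2]
        have htr : |(a (x + (2 : ℝ) • y) - a x) - (a (x + (2 : ℝ) • y) + a x - 2 * a (x + y))| ≤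
            |a (x + (2 : ℝ) • y) - a x| + |a (x + (2 : ℝ) • y) + a x - 2 * a (x + y)| :=
          abs_sub _ _
        push_cast
        calc |(a (x + (2 : ℝ) • y) - a x) - (a (x + (2 : ℝ) • y) + a x - 2 * a (x + y))| / 2
            ≤ (|a (x + (2 : ℝ) • y) - a x| + |a (x + (2 : ℝ) • y) + a x - 2 * a (x + y)|) / 2 := by
              linarith
        _ ≤ ((2 * Na / 2 ^ m + Z * ((m : ℝ) / 2) * μ (2 * ‖y‖)) + Z * μ ‖y‖) / 2 := by
              linarith
        _ ≤ ((2 * Na / 2 ^ m + Z * ((m : ℝ) / 2) * (2 * μ ‖y‖)) + Z * μ ‖y‖) / 2 := by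
              linarith
        _ = 2 * Na / (2 ^ m * 2) + Z * (((m : ℝ) + 1) / 2) * μ ‖y‖ := by
              ring
        _ = 2 * Na / 2 ^ (m + 1) + Z * (((m : ℝ) + 1) / 2) * μ ‖y‖ := by
              rw [hpow]
    -- choice of the constant
    have hlog2 : 0 < Real.log 2 := Real.log_pos one_lt_two
    refine ⟨2 * Na / (μ 1 * Real.log 2) + Z / Real.log 2 + 1, ?_, ?_⟩
    · have t1 : 0 ≤ 2 * Na / (μ 1 * Real.log 2) := by positivity
      have t2 : 0 ≤ Z / Real.log 2 := by positivity
      linarith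
    intro x y hy0 hy1
    set t : ℝ := ‖y‖ with ht
    have hinv1 : (1 : ℝ) ≤ 1 / t := by rw [le_div_iff₀ hy0]; linarith
    have hL : 0 ≤ Real.logb 2 (1 / t) := Real.logb_nonneg one_lt_two hinv1
    set n : ℕ := ⌊Real.logb 2 (1 / t)⌋₊ + 1 with hn
    have hn1 : (n : ℝ) ≤ Real.logb 2 (1 / t) + 1 := by
      have := Nat.floor_le hL
      rw [hn]
      push_cast
      linarith
    have hn2 : Real.logb 2 (1 / t) ≤ (n : ℝ) := by
      have := Nat.lt_floor_add_one (Real.logb 2 (1 / t))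
      rw [hn]
      push_cast
      linarith
    have h2L : (2 : ℝ) ^ Real.logb 2 (1 / t) = 1 / t :=
      Real.rpow_logb two_pos (by norm_num) (by positivity)
    have hrn : ((2 : ℝ) ^ n : ℝ) = (2 : ℝ) ^ ((n : ℕ) : ℝ) := (Real.rpow_natCast 2 n).symm
    have hpow_le : (2 : ℝ) ^ n ≤ 2 * (1 / t) := by
      rw [hrn]
      calc (2 : ℝ) ^ ((n : ℕ) : ℝ) ≤ 2 ^ (Real.logb 2 (1 / t) + 1) :=
            Real.rpow_le_rpow_of_exponent_le one_le_two hn1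
      _ = 2 * (1 / t) := by
            rw [Real.rpow_add two_pos, h2L, Real.rpow_one]; ring
    have hpow_ge : 1 / t ≤ (2 : ℝ) ^ n := by
      rw [hrn]
      calc 1 / t = 2 ^ Real.logb 2 (1 / t) := h2L.symm
      _ ≤ (2 : ℝ) ^ ((n : ℕ) : ℝ) := Real.rpow_le_rpow_of_exponent_le one_le_two hn2
    have hkey := key n x y (by
      have h := mul_le_mul_of_nonneg_right hpow_le hy0.le
      have ht2 : 2 * (1 / t) * t = 2 := by field_simp
      rw [ht2] at h
      exact h)
    have hlog_ge : Real.log 2 ≤ Real.log (1 + 1 / t) := by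
      apply Real.log_le_log (by norm_num)
      linarith
    have hlogpos : 0 < Real.log (1 + 1 / t) := lt_of_lt_of_le hlog2 hlog_ge
    have hμt : 0 ≤ μ t := hμnonneg t hy0.le
    set Lg : ℝ := Real.log (1 + 1 / t) with hLg
    -- bound n by logarithms
    have hnlog : (n : ℝ) * Real.log 2 ≤ 2 * Lg := by
      have h1 : Real.logb 2 (1 / t) = Real.log (1 / t) / Real.log 2 := by
        rw [Real.logb]
      have h2 : Real.log (1 / t) ≤ Lg := by
        apply Real.log_le_log (by positivity)
        linarith
      rw [h1] at hn1
      have h5 := mul_le_mul_of_nonneg_right hn1 hlog2.le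
      have e : (Real.log (1 / t) / Real.log 2 + 1) * Real.log 2 =
          Real.log (1 / t) + Real.log 2 := by
        field_simp
      rw [e] at h5
      linarith
    have hnlog' : (n : ℝ) ≤ 2 * Lg / Real.log 2 := (le_div_iff₀ hlog2).mpr hnlog
    -- bound the first term
    have h2npos : (0 : ℝ) < 2 ^ n := by positivity
    have hterm1 : 2 * Na / 2 ^ n ≤ 2 * Na * t := by
      rw [div_le_iff₀ h2npos]
      have h5 : 1 ≤ 2 ^ n * t := (div_le_iff₀ hy0).mp hpow_ge
      nlinarith
    have hμscale : t * μ 1 ≤ μ t := hscale t hy0 hy1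
    -- assemble
    have hterm1' : 2 * Na * t ≤ 2 * Na / μ 1 * μ t := by
      have h6 : t ≤ μ t / μ 1 := (le_div_iff₀ hμ1).mpr (by linarith)
      calc 2 * Na * t ≤ 2 * Na * (μ t / μ 1) := by
            apply mul_le_mul_of_nonneg_left h6 (by linarith)
      _ = 2 * Na / μ 1 * μ t := by ring
    have hone_le : 1 ≤ Lg / Real.log 2 := (le_div_iff₀ hlog2).mpr (by linarith)
    have hμne : μ 1 ≠ 0 := ne_of_gt hμ1
    have hlne : Real.log 2 ≠ 0 := ne_of_gt hlog2
    have ealg1 : ∀ A B C E D : ℝ, B ≠ 0 → D ≠ 0 →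
        A / B * C * (E / D) = A / (B * D) * C * E := by
      intro A B C E D hB hD
      rw [div_eq_mul_inv, div_eq_mul_inv, div_eq_mul_inv, mul_inv]
      ring
    have ealg2 : ∀ A C E D : ℝ, D ≠ 0 → A * C / 2 * (2 * E / D) = A / D * C * E := by
      intro A C E D hD
      rw [div_eq_mul_inv, div_eq_mul_inv, div_eq_mul_inv]
      ring
    have hterm1'' : 2 * Na / μ 1 * μ t ≤ 2 * Na / (μ 1 * Real.log 2) * μ t * Lg := by
      have hA : 0 ≤ 2 * Na / μ 1 * μ t := by positivity
      calc 2 * Na / μ 1 * μ t ≤ 2 * Na / μ 1 * μ t * (Lg / Real.log 2) :=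
            le_mul_of_one_le_right hA hone_le
      _ = 2 * Na / (μ 1 * Real.log 2) * μ t * Lg :=
            ealg1 (2 * Na) (μ 1) (μ t) Lg (Real.log 2) hμne hlne
    have hterm2 : Z * ((n : ℝ) / 2) * μ t ≤ Z / Real.log 2 * μ t * Lg := by
      have hc : 0 ≤ Z * μ t / 2 := by positivity
      have h7 := mul_le_mul_of_nonneg_left hnlog' hc
      calc Z * ((n : ℝ) / 2) * μ t = Z * μ t / 2 * (n : ℝ) := by ring
      _ ≤ Z * μ t / 2 * (2 * Lg / Real.log 2) := h7
      _ = Z / Real.log 2 * μ t * Lg := ealg2 Z (μ t) Lg (Real.log 2) hlne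
    have hfinal : |a (x + y) - a x| ≤
        (2 * Na / (μ 1 * Real.log 2) + Z / Real.log 2) * μ t * Lg := by
      calc |a (x + y) - a x| ≤ 2 * Na / 2 ^ n + Z * ((n : ℝ) / 2) * μ t := hkey
      _ ≤ 2 * Na / (μ 1 * Real.log 2) * μ t * Lg + Z / Real.log 2 * μ t * Lg := by
            linarith
      _ = (2 * Na / (μ 1 * Real.log 2) + Z / Real.log 2) * μ t * Lg := by ring
    have hextra : 0 ≤ 1 * μ t * Lg := by positivity
    calc |a (x + y) - a x| ≤ (2 * Na / (μ 1 * Real.log 2) + Z / Real.log 2) * μ t * Lg :=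
          hfinal
    _ ≤ (2 * Na / (μ 1 * Real.log 2) + Z / Real.log 2 + 1) * μ t * Lg := by nlinarith
    _ = (2 * Na / (μ 1 * Real.log 2) + Z / Real.log 2 + 1) * μ ‖y‖ * Real.log (1 + 1 / ‖y‖) := by
          rw [hLg, ht]
end
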